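/- Let n ≥ 1, k > 0, λ ≥ 0, r > 0, and let l : S → ℝ satisfy l(u) ≥ r for all u, with c : S → ℝ satisfying c(u) ≥ λ/(2k) > 0. Then the quotient Q = [(1/(2n·k^{2n}))∫ sinh^{2n}(k·l) dμ] / [∫ sinh^{2n-1}(k·l)cosh(k·l)/(k^{2n-1}·c) dμ] satisfies Q ≥ (λ/(4nk²))·tanh(kr), assuming all integrals are finite and positive. -/
import Mathlib


open Real MeasureTheory

/-- Integral estimate giving the lower bound `λ/(4nk²)·tanh(kr)` in Theorem 2. -/
theorem volume_area_lower_integral_ineq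
    {S : Type*} [MeasurableSpace S] (μ : Measure S) (n : ℕ) (hn : 1 ≤ n)
    (k lam r : ℝ) (hk : 0 < k) (hlam : 0 ≤ lam) (hr : 0 < r) (l c : S → ℝ)
    (hl : ∀ u, r ≤ l u) (hc : ∀ u, lam / (2 * k) ≤ c u) (hcpos : 0 < lam / (2 * k))
    (hint1 : Integrable (fun u => Real.sinh (k * l u) ^ (2 * n)) μ)
    (hint2 : Integrable (fun u =>
      Real.sinh (k * l u) ^ (2 * n - 1) * Real.cosh (k * l u) / (k ^ (2 * n - 1) * c u)) μ)
    (hpos1 : 0 < ∫ u, Real.sinh (k * l u) ^ (2 * n) ∂μ)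
    (hpos2 : 0 < ∫ u,
      Real.sinh (k * l u) ^ (2 * n - 1) * Real.cosh (k * l u) / (k ^ (2 * n - 1) * c u) ∂μ) :
    (lam / (4 * n * k ^ 2)) * Real.tanh (k * r) ≤
      ((1 / (2 * n * k ^ (2 * n))) * ∫ u, Real.sinh (k * l u) ^ (2 * n) ∂μ) /
        (∫ u, Real.sinh (k * l u) ^ (2 * n - 1) * Real.cosh (k * l u) /
          (k ^ (2 * n - 1) * c u) ∂μ) := by
  set A := ∫ u, Real.sinh (k * l u) ^ (2 * n) ∂μ with hA
  set B := ∫ u, Real.sinh (k * l u) ^ (2 * n - 1) * Real.cosh (k * l u) /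
      (k ^ (2 * n - 1) * c u) ∂μ with hB
  set C : ℝ := lam * k ^ (2 * n) * Real.tanh (k * r) / (2 * k ^ 2) with hC
  have hn' : (1:ℝ) ≤ (n:ℝ) := by exact_mod_cast hn
  have hkn1 : (0:ℝ) < k ^ (2 * n - 1) := pow_pos hk _
  have hkn : (0:ℝ) < k ^ (2 * n) := pow_pos hk _
  have hT : 0 ≤ Real.tanh (k * r) := by
    rw [Real.tanh_eq_sinh_div_cosh]
    have : 0 ≤ Real.sinh (k * r) := Real.sinh_nonneg_iff.mpr (by positivity)
    positivity
  have hpow : ∀ u, Real.sinh (k * l u) ^ (2 * n) =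
      Real.sinh (k * l u) ^ (2 * n - 1) * Real.sinh (k * l u) := by
    intro u
    conv_lhs => rw [show 2 * n = (2 * n - 1) + 1 by omega, pow_succ]
  have key : C * B ≤ A := by
    rw [hA, hB, ← integral_const_mul]
    refine integral_mono (hint2.const_mul C) hint1 ?_
    intro u
    have hklr : k * r ≤ k * l u := by
      have := hl u; nlinarith
    have hS : 0 < Real.sinh (k * l u) := Real.sinh_pos_iff.mpr (by nlinarith)
    have hCh : 0 < Real.cosh (k * l u) := Real.cosh_pos _
    have hTC : Real.tanh (k * r) * Real.cosh (k * l u) ≤ Real.sinh (k * l u) := by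
      have hsub : 0 ≤ Real.sinh (k * l u - k * r) :=
        Real.sinh_nonneg_iff.mpr (by linarith)
      rw [Real.sinh_sub] at hsub
      have hchr : 0 < Real.cosh (k * r) := Real.cosh_pos _
      rw [Real.tanh_eq_sinh_div_cosh, div_mul_eq_mul_div, div_le_iff₀ hchr]
      nlinarith
    have hcu : 0 < c u := lt_of_lt_of_le hcpos (hc u)
    have hSp : 0 < Real.sinh (k * l u) ^ (2 * n - 1) := pow_pos hS _
    simp only
    rw [show C * (Real.sinh (k * l u) ^ (2 * n - 1) * Real.cosh (k * l u) / (k ^ (2 * n - 1) * c u)) = C * (Real.sinh (k * l u) ^ (2 * n - 1) * Real.cosh (k * l u)) / (k ^ (2 * n - 1) * c u) by ring, div_le_iff₀ (by positivity), hpow u, hC, ← mul_assoc]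
    have hk2 : k ^ (2 * n) = k ^ (2 * n - 1) * k := by
      conv_lhs => rw [show 2 * n = (2 * n - 1) + 1 by omega, pow_succ]
    rw [hk2]
    have hlc : lam / (2 * k) ≤ c u := hc u
    have h1 : lam / (2 * k) * (Real.tanh (k * r) * Real.cosh (k * l u)) ≤
        c u * Real.sinh (k * l u) := by
      have hTc : 0 ≤ Real.tanh (k * r) * Real.cosh (k * l u) := by positivity
      calc lam / (2 * k) * (Real.tanh (k * r) * Real.cosh (k * l u))
          ≤ c u * (Real.tanh (k * r) * Real.cosh (k * l u)) := by
            exact mul_le_mul_of_nonneg_right hlc hTc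
        _ ≤ c u * Real.sinh (k * l u) := mul_le_mul_of_nonneg_left hTC hcu.le
    have hexp : lam * (k ^ (2 * n - 1) * k) * Real.tanh (k * r) / (2 * k ^ 2) *
        Real.sinh (k * l u) ^ (2 * n - 1) * Real.cosh (k * l u) =
        (k ^ (2 * n - 1) * Real.sinh (k * l u) ^ (2 * n - 1)) *
          (lam / (2 * k) * (Real.tanh (k * r) * Real.cosh (k * l u))) := by
      field_simp
    rw [hexp]
    calc (k ^ (2 * n - 1) * Real.sinh (k * l u) ^ (2 * n - 1)) *
          (lam / (2 * k) * (Real.tanh (k * r) * Real.cosh (k * l u)))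
        ≤ (k ^ (2 * n - 1) * Real.sinh (k * l u) ^ (2 * n - 1)) *
          (c u * Real.sinh (k * l u)) := by
          exact mul_le_mul_of_nonneg_left h1 (by positivity)
      _ = Real.sinh (k * l u) ^ (2 * n - 1) * Real.sinh (k * l u) *
          (k ^ (2 * n - 1) * c u) := by ring
  rw [le_div_iff₀ hpos2]
  have hCeq : lam / (4 * ↑n * k ^ 2) * Real.tanh (k * r) * B =
      (1 / (2 * ↑n * k ^ (2 * n))) * (C * B) := by
    rw [hC]; field_simp; ring
  rw [hCeq]
  have hD : (0:ℝ) < 1 / (2 * ↑n * k ^ (2 * n)) := by positivity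
  exact mul_le_mul_of_nonneg_left key hD.le
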